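/- arXiv:1001.1412 — 3 statements merged into one kernel-verified Lean document; each statement's English description precedes it below -/
import Mathlib

section
/- Let p > 0, α, β > 0, and let w, z be complex with Re w < 0 and Re z < 0. Then ∫₀^∞ t^{-z-1} (α^p + β^p t^p)^{(w+z)/p} dt = (1/p) · α^w β^z · B(-w/p, -z/p), where B is the Euler Beta function. -/
/-!
The integral is the Mellin transform at `-z` of `t ↦ (α^p + β^p t^p)^((w+z)/p)`. Factoring out
`α^p` and substituting `t ↦ (β/α) t`, then `t ↦ t^(1/p)`, turns it into `α^w β^z / p` times the
Mellin transform of `(1 + t)^(-(u+v))` at `u = -z/p`, with `v = -w/p`. The substitution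
`x = t/(1+t)` identifies that with `B(u, v) = ∫₀¹ x^(u-1) (1-x)^(v-1) dx`, and for `Re u, Re v > 0`
this is `Γ(u)Γ(v)/Γ(u+v)`.
-/

open Complex MeasureTheory
open Set Real

lemma image_div_one_add_Ioi : (fun t : ℝ => t / (1 + t)) '' Ioi 0 = Ioo 0 1 := by
  ext x
  constructor
  · rintro ⟨t, ht, rfl⟩
    have ht : (0 : ℝ) < t := ht
    exact ⟨by positivity, (div_lt_one (by positivity)).2 (by linarith)⟩
  · rintro ⟨hx0, hx1⟩
    refine ⟨x / (1 - x), div_pos hx0 (sub_pos.2 hx1), ?_⟩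
    have : 1 - x ≠ 0 := (sub_pos.2 hx1).ne'
    field_simp
    ring

lemma injOn_div_one_add_Ioi : InjOn (fun t : ℝ => t / (1 + t)) (Ioi 0) := by
  intro s hs t ht hst
  have hs : (0 : ℝ) < s := hs
  have ht : (0 : ℝ) < t := ht
  field_simp at hst
  linarith

lemma hasDerivAt_div_one_add {t : ℝ} (ht : 1 + t ≠ 0) :
    HasDerivAt (fun t : ℝ => t / (1 + t)) ((1 + t) ^ 2)⁻¹ t := by
  refine ((hasDerivAt_id' t).div ((hasDerivAt_id' t).const_add 1) ht).congr_deriv ?_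
  field_simp
  ring

lemma cpow_add_eq_mul_sq {x : ℂ} (hx : x ≠ 0) (u v : ℂ) :
    x ^ (u + v) = x ^ (u - 1) * x ^ (v - 1) * x ^ 2 := by
  rw [← cpow_add _ _ hx, ← cpow_ofNat, ← cpow_add _ _ hx]
  ring_nf

-- Holds for all `u v`: both sides are the same Bochner integral after a change of variables,
-- convergent or not.
lemma betaIntegral_eq_mellin (u v : ℂ) :
    betaIntegral u v = mellin (fun t : ℝ => ((1 + t : ℝ) : ℂ) ^ (-(u + v))) u := by
  rw [betaIntegral, intervalIntegral.integral_of_le zero_le_one, integral_Ioc_eq_integral_Ioo,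
    ← image_div_one_add_Ioi, integral_image_eq_integral_abs_deriv_smul measurableSet_Ioi
      (fun t ht => (hasDerivAt_div_one_add (by linarith [mem_Ioi.1 ht])).hasDerivWithinAt)
      injOn_div_one_add_Ioi]
  refine setIntegral_congr_fun measurableSet_Ioi fun t ht => ?_
  dsimp only
  have ht : (0 : ℝ) < t := ht
  have hc : (0 : ℝ) < 1 + t := by linarith
  have hc' : (1 + t : ℂ) ≠ 0 := by exact_mod_cast hc.ne'
  have hy : 1 - ((t / (1 + t) : ℝ) : ℂ) = ((1 + t : ℝ) : ℂ)⁻¹ := by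
    push_cast
    field_simp
    ring
  rw [hy, ofReal_div, div_cpow_ofReal_nonneg ht.le hc.le, inv_cpow_ofReal_nonneg hc.le,
    abs_of_pos (by positivity), cpow_neg, cpow_add_eq_mul_sq (by exact_mod_cast hc.ne'),
    real_smul, smul_eq_mul]
  push_cast
  field_simp

lemma mellin_congr_Ioi {E : Type*} [NormedAddCommGroup E] [NormedSpace ℂ E] {f g : ℝ → E}
    (h : EqOn f g (Ioi 0)) (s : ℂ) : mellin f s = mellin g s :=
  setIntegral_congr_fun measurableSet_Ioi fun t ht => by rw [h ht]

lemma rpow_add_mul_rpow_eq {a b t : ℝ} (ha : 0 < a) (hb : 0 ≤ b) (ht : 0 ≤ t) (p : ℝ) :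
    a ^ p + b ^ p * t ^ p = a ^ p * (1 + (b / a * t) ^ p) := by
  rw [mul_rpow (div_nonneg hb ha.le) ht, div_rpow hb ha.le]
  field_simp

lemma mellin_rpow_add_mul_rpow_cpow {a b : ℝ} (ha : 0 < a) (hb : 0 < b) (p : ℝ) (c s : ℂ) :
    mellin (fun t : ℝ => ((a ^ p + b ^ p * t ^ p : ℝ) : ℂ) ^ c) s =
      |p|⁻¹ * (a : ℂ) ^ (p * c + s) * (b : ℂ) ^ (-s) *
        mellin (fun t : ℝ => ((1 + t : ℝ) : ℂ) ^ c) (s / p) := by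
  set g : ℝ → ℂ := fun t => ((1 + t : ℝ) : ℂ) ^ c
  have hscale : EqOn (fun t : ℝ => ((a ^ p + b ^ p * t ^ p : ℝ) : ℂ) ^ c)
      (fun t => (a : ℂ) ^ (p * c) • g ((b / a * t) ^ p)) (Ioi 0) := fun t ht => by
    have ht : 0 < t := ht
    have hpos : 0 ≤ 1 + (b / a * t) ^ p := by positivity
    simp only [g, smul_eq_mul]
    rw [rpow_add_mul_rpow_eq ha hb.le ht.le, ofReal_mul,
      mul_cpow_ofReal_nonneg (rpow_nonneg ha.le p) hpos, ← cpow_mul_ofReal_nonneg ha.le]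
  have ha' : (a : ℂ) ≠ 0 := ofReal_ne_zero.2 ha.ne'
  rw [mellin_congr_Ioi hscale, mellin_const_smul,
    mellin_comp_mul_left (fun y => g (y ^ p)) _ (div_pos hb ha), mellin_comp_rpow, ofReal_div,
    div_cpow_ofReal_nonneg hb.le ha.le, cpow_add _ _ ha']
  simp only [smul_eq_mul, real_smul, cpow_neg]
  push_cast
  field_simp

lemma Gamma_mul_Gamma_div_Gamma_add {u v : ℂ} (hu : 0 < u.re) (hv : 0 < v.re) :
    Gamma u * Gamma v / Gamma (u + v) = betaIntegral u v := by
  rw [Gamma_mul_Gamma_eq_betaIntegral hu hv,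
    mul_div_cancel_left₀ _ (Gamma_ne_zero_of_re_pos (by rw [add_re]; positivity))]

/-- `∫₀^∞ t^{-z-1}(α^p+β^p t^p)^{(w+z)/p} dt = (1/p) α^w β^z B(-w/p,-z/p)` for `p, α, β > 0`
and `Re w < 0`, `Re z < 0`, where `B(u,v) = Γ(u)Γ(v)/Γ(u+v)`. -/
theorem beta_integral_pform (p α β : ℝ) (hp : 0 < p) (hα : 0 < α) (hβ : 0 < β)
    (w z : ℂ) (hw : w.re < 0) (hz : z.re < 0) :
    ∫ t in Set.Ioi (0 : ℝ),
        (t : ℂ) ^ (-z - 1) * ((α ^ p + β ^ p * t ^ p : ℝ) : ℂ) ^ ((w + z) / p) =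
      (1 / (p : ℂ)) * (α : ℂ) ^ w * (β : ℂ) ^ z *
        (Complex.Gamma (-w / p) * Complex.Gamma (-z / p) /
          Complex.Gamma (-w / p + -z / p)) := by
  have hp' : (p : ℂ) ≠ 0 := ofReal_ne_zero.2 hp.ne'
  have hw' : 0 < (-w / p).re := by rw [div_ofReal_re, neg_re]; exact div_pos (neg_pos.2 hw) hp
  have hz' : 0 < (-z / p).re := by rw [div_ofReal_re, neg_re]; exact div_pos (neg_pos.2 hz) hp
  have hc : (w + z) / p = -(-z / p + -w / p) := by ring
  have hα_exp : (p : ℂ) * -(-z / p + -w / p) + -z = w := by field_simp; ring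
  change mellin (fun t : ℝ => ((α ^ p + β ^ p * t ^ p : ℝ) : ℂ) ^ ((w + z) / p)) (-z) = _
  rw [mellin_rpow_add_mul_rpow_cpow hα hβ, hc, hα_exp, ← betaIntegral_eq_mellin,
    ← betaIntegral_symm, ← Gamma_mul_Gamma_div_Gamma_add hw' hz', abs_of_pos hp, neg_neg]
  push_cast
  ring
end

section
/- Let (Ω,μ) be a σ-finite measure space and f a positive measurable function with ∫ f^p dμ < ∞ for a < p < b. Suppose the analytic function F(z) = ∫ f^z dμ on the strip a < Re z < b extends to an analytic function on the strip α < Re z < β where α ≤ a < b ≤ β. Then ∫ f^p dμ < ∞ for all α < p < β and the extension equals ∫ f^z dμ on the whole strip α < Re z < β. -/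
open Complex MeasureTheory ProbabilityTheory Filter Set Topology
open scoped Nat

/-!
Put `X = log f`, so that `∫ f^z dμ` is the complex moment generating function of `X`. The set `I`
of real `p` with `exp (p X)` integrable is an interval, and on the strip over its interior the
moment generating function is holomorphic, hence equal to `F` by the identity theorem.

It remains to see that `interior I` is relatively closed in `(α, β)`. Near a point `x` of its
closure pick `q ∈ interior I`; the Taylor coefficients of `F` at `q` are the moments
`∫ Xⁿ exp (q X) / n!`, and `F` is holomorphic on a disc of radius `R` about `q` that reaches
past `x`. For `r < R` the Taylor series at `q + r` and `q - r` add up to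
`∑ (rⁿ + (-r)ⁿ) / n! ∫ Xⁿ exp (q X)`, a series of nonnegative terms, which by monotone
convergence is `∫ (exp ((q + r) X) + exp ((q - r) X))`. So `[q - r, q + r] ⊆ I` for all
`r < R`, and `x ∈ interior I`.
-/

theorem eqOn_re_preimage_of_eqOn {F G : ℂ → ℂ} {s t : Set ℝ} (hs : IsOpen s) (hsc : Convex ℝ s)
    (ht : IsOpen t) (htne : t.Nonempty) (hts : t ⊆ s)
    (hF : DifferentiableOn ℂ F (re ⁻¹' s)) (hG : DifferentiableOn ℂ G (re ⁻¹' s))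
    (hFG : EqOn F G (re ⁻¹' t)) : EqOn F G (re ⁻¹' s) := by
  have hU : IsOpen (re ⁻¹' s) := hs.preimage continuous_re
  obtain ⟨x, hx⟩ := htne
  refine (hF.analyticOnNhd hU).eqOn_of_preconnected_of_eventuallyEq (hG.analyticOnNhd hU)
    (hsc.linear_preimage reLm).isPreconnected (z₀ := x) (by simpa using hts hx) ?_
  exact eventuallyEq_of_mem ((ht.preimage continuous_re).mem_nhds (by simpa using hx)) hFG

theorem Complex.ball_ofReal_subset_re_preimage_Ioo (q R : ℝ) :
    Metric.ball (q : ℂ) R ⊆ re ⁻¹' Ioo (q - R) (q + R) := by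
  intro z hz
  have h : |z.re - q| < R := by
    simpa using (abs_re_le_norm (z - q)).trans_lt (mem_ball_iff_norm.mp hz)
  exact ⟨by linarith [(abs_lt.mp h).1], by linarith [(abs_lt.mp h).2]⟩

theorem pow_add_neg_pow_nonneg {R : Type*} [CommRing R] [LinearOrder R] [IsStrictOrderedRing R]
    (x : R) (n : ℕ) : 0 ≤ x ^ n + (-x) ^ n := by
  rcases n.even_or_odd with hn | hn
  · rw [hn.neg_pow]
    exact add_nonneg (hn.pow_nonneg x) (hn.pow_nonneg x)
  · rw [hn.neg_pow, add_neg_cancel]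

theorem MeasureTheory.integrable_of_hasSum_of_nonneg {Ω ι : Type*} [MeasurableSpace Ω]
    {μ : Measure Ω} [Countable ι] {g : ι → Ω → ℝ} {G : Ω → ℝ} (hGm : AEStronglyMeasurable G μ)
    (hg : ∀ i, Integrable (g i) μ) (hg0 : ∀ i ω, 0 ≤ g i ω) (hG : ∀ ω, HasSum (g · ω) (G ω))
    (hsum : Summable fun i ↦ ∫ ω, g i ω ∂μ) : Integrable G μ := by
  refine ⟨hGm, ?_⟩
  rw [hasFiniteIntegral_iff_ofReal (ae_of_all _ fun ω ↦ (hG ω).nonneg (hg0 · ω))]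
  calc ∫⁻ ω, ENNReal.ofReal (G ω) ∂μ
      = ∫⁻ ω, ∑' i, ENNReal.ofReal (g i ω) ∂μ := by
        congr! with ω
        rw [← (hG ω).tsum_eq, ENNReal.ofReal_tsum_of_nonneg (hg0 · ω) (hG ω).summable]
    _ = ∑' i, ENNReal.ofReal (∫ ω, g i ω ∂μ) := by
        rw [lintegral_tsum fun i ↦ (hg i).aemeasurable.ennreal_ofReal]
        congr! with i
        exact (ofReal_integral_eq_lintegral_ofReal (hg i) (ae_of_all _ (hg0 i))).symm
    _ < ⊤ := by
        rw [← ENNReal.ofReal_tsum_of_nonneg (fun i ↦ integral_nonneg (hg0 i)) hsum]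
        exact ENNReal.ofReal_lt_top

theorem summable_taylorCoeff_of_differentiableOn_ball {F : ℂ → ℂ} {q R r : ℝ} {B : ℕ → ℝ}
    (hF : DifferentiableOn ℂ F (Metric.ball (q : ℂ) R)) (hB : ∀ n, iteratedDeriv n F q = B n)
    (hr : |r| < R) : Summable fun n ↦ r ^ n / n ! * B n := by
  have hz : (q + r : ℂ) ∈ Metric.ball (q : ℂ) R := by
    simpa [mem_ball_iff_norm] using hr
  refine summable_ofReal.mp ((hasSum_taylorSeries_on_ball hF hz).summable.congr fun n ↦ ?_)
  simp only [hB, add_sub_cancel_left, smul_eq_mul]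
  push_cast
  ring

namespace ProbabilityTheory

variable {Ω : Type*} [MeasurableSpace Ω] {μ : Measure Ω} {X : Ω → ℝ}

theorem iteratedDeriv_complexMGF_ofReal {q : ℝ} (hq : q ∈ interior (integrableExpSet X μ))
    (n : ℕ) :
    iteratedDeriv n (complexMGF X μ) q = ((μ[fun ω ↦ X ω ^ n * Real.exp (q * X ω)] : ℝ) : ℂ) := by
  rw [iteratedDeriv_complexMGF (by simpa using hq), ← integral_complex_ofReal]
  push_cast
  rfl

theorem integrable_exp_add_exp_of_summable {q r : ℝ} (hq : q ∈ interior (integrableExpSet X μ))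
    (hsum : Summable fun n ↦ (r ^ n + (-r) ^ n) / n ! * μ[fun ω ↦ X ω ^ n * Real.exp (q * X ω)]) :
    Integrable (fun ω ↦ Real.exp ((q + r) * X ω) + Real.exp ((q - r) * X ω)) μ := by
  have hX : AEMeasurable X μ := aemeasurable_of_mem_interior_integrableExpSet hq
  refine integrable_of_hasSum_of_nonneg
    (g := fun n ω ↦ (r ^ n + (-r) ^ n) / n ! * (X ω ^ n * Real.exp (q * X ω))) (by fun_prop)
    (fun n ↦ (integrable_pow_mul_exp_of_mem_interior_integrableExpSet hq n).const_mul _)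
    (fun n ω ↦ ?_) (fun ω ↦ ?_) (hsum.congr fun n ↦ (integral_const_mul _ _).symm)
  · have h : (r ^ n + (-r) ^ n) * X ω ^ n = (r * X ω) ^ n + (-(r * X ω)) ^ n := by ring
    rw [div_mul_eq_mul_div, ← mul_assoc, h]
    have := pow_add_neg_pow_nonneg (r * X ω) n
    positivity
  · have h := ((NormedSpace.expSeries_div_hasSum_exp (r * X ω)).add
      (NormedSpace.expSeries_div_hasSum_exp (-(r * X ω)))).mul_right (Real.exp (q * X ω))
    have e : (Real.exp (r * X ω) + Real.exp (-(r * X ω))) * Real.exp (q * X ω) =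
        Real.exp ((q + r) * X ω) + Real.exp ((q - r) * X ω) := by
      rw [add_mul, ← Real.exp_add, ← Real.exp_add]; ring_nf
    rw [← Real.exp_eq_exp_ℝ, e] at h
    exact h.congr_fun fun n ↦ by ring

theorem Icc_subset_integrableExpSet_of_integrable_exp_add_exp {q r : ℝ} (hX : AEMeasurable X μ)
    (h : Integrable (fun ω ↦ Real.exp ((q + r) * X ω) + Real.exp ((q - r) * X ω)) μ) :
    Icc (q - r) (q + r) ⊆ integrableExpSet X μ := by
  have hplus : q + r ∈ integrableExpSet X μ := h.mono' (by fun_prop) (ae_of_all _ fun ω ↦ by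
    rw [Real.norm_of_nonneg (Real.exp_nonneg _)]
    exact le_add_of_nonneg_right (Real.exp_nonneg _))
  have hminus : q - r ∈ integrableExpSet X μ := h.mono' (by fun_prop) (ae_of_all _ fun ω ↦ by
    rw [Real.norm_of_nonneg (Real.exp_nonneg _)]
    exact le_add_of_nonneg_left (Real.exp_nonneg _))
  exact fun p hp ↦ integrable_exp_mul_of_le_of_le hminus hplus hp.1 hp.2

theorem Ioo_subset_integrableExpSet_of_differentiableOn_ball {F : ℂ → ℂ} {q R : ℝ}
    (hq : q ∈ interior (integrableExpSet X μ)) (hFq : F =ᶠ[𝓝 (q : ℂ)] complexMGF X μ)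
    (hF : DifferentiableOn ℂ F (Metric.ball (q : ℂ) R)) :
    Ioo (q - R) (q + R) ⊆ integrableExpSet X μ := by
  intro p hp
  have hr : |(|p - q|)| < R := by
    rw [abs_abs]; exact abs_sub_lt_iff.mpr ⟨by linarith [hp.2], by linarith [hp.1]⟩
  have hB n : iteratedDeriv n F q = ((μ[fun ω ↦ X ω ^ n * Real.exp (q * X ω)] : ℝ) : ℂ) :=
    (hFq.iteratedDeriv_eq n).trans (iteratedDeriv_complexMGF_ofReal hq n)
  have hsum := (summable_taylorCoeff_of_differentiableOn_ball hF hB hr).add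
    (summable_taylorCoeff_of_differentiableOn_ball hF hB (by rwa [abs_neg]))
  refine Icc_subset_integrableExpSet_of_integrable_exp_add_exp
    (aemeasurable_of_mem_interior_integrableExpSet hq)
    (integrable_exp_add_exp_of_summable hq (hsum.congr fun n ↦ by ring)) ?_
  exact ⟨by linarith [neg_abs_le (p - q)], by linarith [le_abs_self (p - q)]⟩

variable {F : ℂ → ℂ} {a b α β : ℝ}

theorem eqOn_complexMGF_of_eqOn_of_differentiableOn (hαa : α ≤ a) (hab : a < b) (hbβ : b ≤ β)
    (hI : Ioo a b ⊆ integrableExpSet X μ) (hF : DifferentiableOn ℂ F (re ⁻¹' Ioo α β))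
    (hFeq : EqOn F (complexMGF X μ) (re ⁻¹' Ioo a b)) :
    EqOn F (complexMGF X μ) (re ⁻¹' (interior (integrableExpSet X μ) ∩ Ioo α β)) :=
  eqOn_re_preimage_of_eqOn (isOpen_interior.inter isOpen_Ioo)
    (convex_integrableExpSet.interior.inter (convex_Ioo α β)) isOpen_Ioo (nonempty_Ioo.mpr hab)
    (subset_inter (interior_maximal hI isOpen_Ioo) (Ioo_subset_Ioo hαa hbβ))
    (hF.mono (preimage_mono inter_subset_right))
    (differentiableOn_complexMGF.mono (preimage_mono inter_subset_left)) hFeq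

theorem Ioo_subset_interior_integrableExpSet_of_eqOn (hαa : α ≤ a) (hab : a < b) (hbβ : b ≤ β)
    (hI : Ioo a b ⊆ integrableExpSet X μ) (hF : DifferentiableOn ℂ F (re ⁻¹' Ioo α β))
    (hFeq : EqOn F (complexMGF X μ) (re ⁻¹' Ioo a b)) :
    Ioo α β ⊆ interior (integrableExpSet X μ) := by
  have hEq := eqOn_complexMGF_of_eqOn_of_differentiableOn hαa hab hbβ hI hF hFeq
  have hmid : (a + b) / 2 ∈ Ioo a b := ⟨by linarith, by linarith⟩
  refine isPreconnected_Ioo.subset_of_closure_inter_subset isOpen_interior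
    ⟨_, Ioo_subset_Ioo hαa hbβ hmid, interior_maximal hI isOpen_Ioo hmid⟩ ?_
  rintro x ⟨hx, hxα, hxβ⟩
  obtain ⟨q, hq, hxq⟩ := Metric.mem_closure_iff.mp hx (min (x - α) (β - x) / 2)
    (by have := lt_min (sub_pos.mpr hxα) (sub_pos.mpr hxβ); positivity)
  have hxq' := abs_lt.mp (show |x - q| < _ from hxq)
  have h₁ := min_le_left (x - α) (β - x)
  have h₂ := min_le_right (x - α) (β - x)
  have hqαβ : q ∈ Ioo α β := ⟨by linarith, by linarith⟩
  set R := min (q - α) (β - q)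
  have hball : Metric.ball (q : ℂ) R ⊆ re ⁻¹' Ioo α β :=
    (ball_ofReal_subset_re_preimage_Ioo q R).trans (preimage_mono (Ioo_subset_Ioo
      (by linarith [min_le_left (q - α) (β - q)]) (by linarith [min_le_right (q - α) (β - q)])))
  have hFq : F =ᶠ[𝓝 (q : ℂ)] complexMGF X μ :=
    eventuallyEq_of_mem (((isOpen_interior.inter isOpen_Ioo).preimage continuous_re).mem_nhds
      (by simpa using And.intro hq hqαβ)) hEq
  refine interior_maximal (Ioo_subset_integrableExpSet_of_differentiableOn_ball hq hFq
    (hF.mono hball)) isOpen_Ioo ⟨?_, ?_⟩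
  · have : q - x < R := lt_min (by linarith) (by linarith)
    linarith
  · have : x - q < R := lt_min (by linarith) (by linarith)
    linarith

end ProbabilityTheory

theorem moment_function_extension_general {Ω : Type*} [MeasurableSpace Ω] (μ : Measure Ω)
    (f : Ω → ℝ) (hfpos : ∀ᵐ ω ∂μ, 0 < f ω)
    (a b α β : ℝ) (hαa : α ≤ a) (hab : a < b) (hbβ : b ≤ β)
    (hint : ∀ p : ℝ, a < p → p < b → Integrable (fun ω => f ω ^ p) μ)
    (F : ℂ → ℂ)
    (hF : DifferentiableOn ℂ F {z : ℂ | α < z.re ∧ z.re < β})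
    (hFeq : ∀ z : ℂ, a < z.re → z.re < b → F z = ∫ ω, ((f ω : ℝ) : ℂ) ^ z ∂μ) :
    (∀ p : ℝ, α < p → p < β → Integrable (fun ω => f ω ^ p) μ) ∧
      ∀ z : ℂ, α < z.re → z.re < β → F z = ∫ ω, ((f ω : ℝ) : ℂ) ^ z ∂μ := by
  set X : Ω → ℝ := fun ω ↦ Real.log (f ω)
  have hrpow (p : ℝ) : (fun ω ↦ f ω ^ p) =ᵐ[μ] fun ω ↦ Real.exp (p * X ω) := by
    filter_upwards [hfpos] with ω hω
    rw [Real.rpow_def_of_pos hω, mul_comm]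
  have hcpow (z : ℂ) : ∫ ω, ((f ω : ℝ) : ℂ) ^ z ∂μ = complexMGF X μ z := by
    refine integral_congr_ae ?_
    filter_upwards [hfpos] with ω hω
    rw [cpow_def_of_ne_zero (ofReal_ne_zero.mpr hω.ne'), ← ofReal_log hω.le, mul_comm]
  have hI : Ioo a b ⊆ integrableExpSet X μ := fun p hp ↦ (hint p hp.1 hp.2).congr (hrpow p)
  have hFX : EqOn F (complexMGF X μ) (re ⁻¹' Ioo a b) := fun z hz ↦
    (hFeq z hz.1 hz.2).trans (hcpow z)
  have hαβ := Ioo_subset_interior_integrableExpSet_of_eqOn hαa hab hbβ hI hF hFX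
  have hEq := eqOn_complexMGF_of_eqOn_of_differentiableOn hαa hab hbβ hI hF hFX
  rw [inter_eq_right.mpr hαβ] at hEq
  exact ⟨fun p h₁ h₂ ↦
      (integrable_of_mem_integrableExpSet (interior_subset (hαβ ⟨h₁, h₂⟩))).congr (hrpow p).symm,
    fun z h₁ h₂ ↦ (hEq ⟨h₁, h₂⟩).trans (hcpow z).symm⟩

/-- If `f > 0` a.e., `f^p` is integrable for `a < p < b`, and the analytic function
`F(z) = ∫ f^z dμ` on `a < Re z < b` extends analytically to `α < Re z < β`, then
`f^p` is integrable for all `α < p < β` and the extension equals `∫ f^z dμ` there. -/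
theorem moment_function_extension {Ω : Type*} [MeasurableSpace Ω] (μ : Measure Ω)
    [SigmaFinite μ] (f : Ω → ℝ) (hf : Measurable f) (hfpos : ∀ᵐ ω ∂μ, 0 < f ω)
    (a b α β : ℝ) (hαa : α ≤ a) (hab : a < b) (hbβ : b ≤ β)
    (hint : ∀ p : ℝ, a < p → p < b → Integrable (fun ω => f ω ^ p) μ)
    (F : ℂ → ℂ)
    (hF : DifferentiableOn ℂ F {z : ℂ | α < z.re ∧ z.re < β})
    (hFeq : ∀ z : ℂ, a < z.re → z.re < b → F z = ∫ ω, ((f ω : ℝ) : ℂ) ^ z ∂μ) :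
    (∀ p : ℝ, α < p → p < β → Integrable (fun ω => f ω ^ p) μ) ∧
      ∀ z : ℂ, α < z.re → z.re < β → F z = ∫ ω, ((f ω : ℝ) : ℂ) ^ z ∂μ :=
  moment_function_extension_general μ f hfpos a b α β hαa hab hbβ hint F hF hFeq
end

section
/- For complex w, z with Re w < 0, Re z < 0 and Re(w+z) > -1, ½ ∫₀^∞ t^{-z-1}(|1+t|^{w+z} + |1-t|^{w+z}) dt = G(w+z) F₂(w,z) / (G(w) G(z)), where G(z) = (1/√π)2^{z/2}Γ((z+1)/2) and F₂(w,z) = ½ B(-w/2, -z/2). -/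
/-!
With `a = -z`, `b = -w`, `c = 1 + w + z` (positive real parts, `a + b + c = 1`), splitting the
integral at `t = 1` and substituting `t = x / (1 - x)` on `(0, ∞)`, `t = x` on `(0, 1)` and
`t = 1 / x` on `(1, ∞)` gives `B(a, b) + B(a, c) + B(b, c)`. Reflection turns
`B(a, b) = Γ(a)Γ(b) / Γ(1 - c)` into `Γ(a)Γ(b)Γ(c) sin(πc) / π`, and since `a + b + c = 1` the
three sines add up to `4 cos(πa/2) cos(πb/2) cos(πc/2)`. On the other side, reflection and
duplication give `Γ(x/2) / Γ((1-x)/2) = 2^(1-x) Γ(x) cos(πx/2) / √π`, and the powers of 2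
multiply to 4.
-/

open Complex MeasureTheory

noncomputable def G (z : ℂ) : ℂ :=
  (Real.sqrt Real.pi : ℂ)⁻¹ * (2 : ℂ) ^ (z / 2) * Complex.Gamma ((z + 1) / 2)

/-- `F₂(w,z) = ½ B(-w/2, -z/2)` where `B(u,v) = Γ(u)Γ(v)/Γ(u+v)`. -/
noncomputable def F₂ (w z : ℂ) : ℂ :=
  (1 / 2) * (Complex.Gamma (-w / 2) * Complex.Gamma (-z / 2) /
    Complex.Gamma (-w / 2 + -z / 2))

open Set
open scoped Real

theorem ofReal_inv_cpow {p : ℝ} (hp : 0 ≤ p) (s : ℂ) : ((p⁻¹ : ℝ) : ℂ) ^ s = ((p : ℂ) ^ s)⁻¹ := by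
  rw [ofReal_inv, inv_cpow _ _ (by rw [arg_ofReal_of_nonneg hp]; exact Real.pi_ne_zero.symm)]

theorem ofReal_one_sub (x : ℝ) : ((1 - x : ℝ) : ℂ) = 1 - (x : ℂ) := by push_cast; ring

theorem ofReal_sqrt_pi_sq : ((√π : ℝ) : ℂ) ^ 2 = π := by
  rw [← ofReal_pow, Real.sq_sqrt Real.pi_pos.le]

theorem ofReal_sqrt_pi_ne_zero : ((√π : ℝ) : ℂ) ≠ 0 :=
  ofReal_ne_zero.2 (Real.sqrt_pos.2 Real.pi_pos).ne'

theorem betaIntegral_eq_integral_Ioo (u v : ℂ) :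
    betaIntegral u v = ∫ x in Ioo (0 : ℝ) 1, (x : ℂ) ^ (u - 1) * (1 - (x : ℂ)) ^ (v - 1) := by
  rw [betaIntegral, intervalIntegral.integral_of_le zero_le_one, integral_Ioc_eq_integral_Ioo]

theorem integrableOn_Ioo_cpow_mul_one_sub_cpow {u v : ℂ} (hu : 0 < u.re) (hv : 0 < v.re) :
    IntegrableOn (fun x : ℝ => (x : ℂ) ^ (u - 1) * (1 - (x : ℂ)) ^ (v - 1)) (Ioo 0 1) :=
  ((intervalIntegrable_iff_integrableOn_Ioc_of_le zero_le_one).1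
    (betaIntegral_convergent hu hv)).mono_set Ioo_subset_Ioc_self

theorem integrableOn_image_and_integral_image_eq_betaIntegral {u v : ℂ} (hu : 0 < u.re)
    (hv : 0 < v.re) {f : ℝ → ℂ} {φ φ' : ℝ → ℝ}
    (hφ : ∀ x ∈ Ioo (0 : ℝ) 1, HasDerivWithinAt φ (φ' x) (Ioo 0 1) x)
    (hφ_inj : InjOn φ (Ioo 0 1))
    (hf : ∀ x ∈ Ioo (0 : ℝ) 1,
      |φ' x| • f (φ x) = (x : ℂ) ^ (u - 1) * (1 - (x : ℂ)) ^ (v - 1)) :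
    IntegrableOn f (φ '' Ioo 0 1) ∧ ∫ t in φ '' Ioo 0 1, f t = betaIntegral u v := by
  rw [integrableOn_image_iff_integrableOn_abs_deriv_smul measurableSet_Ioo hφ hφ_inj,
    integral_image_eq_integral_abs_deriv_smul measurableSet_Ioo hφ hφ_inj,
    setIntegral_congr_fun measurableSet_Ioo hf, betaIntegral_eq_integral_Ioo]
  exact ⟨(integrableOn_Ioo_cpow_mul_one_sub_cpow hu hv).congr_fun (fun x hx => (hf x hx).symm)
    measurableSet_Ioo, rfl⟩

section

variable {a b : ℂ}

theorem integrableOn_and_integral_Ioi_cpow_mul_one_add_cpow (ha : 0 < a.re) (hb : 0 < b.re) :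
    IntegrableOn (fun t : ℝ => (t : ℂ) ^ (a - 1) * ((1 + t : ℝ) : ℂ) ^ (-(a + b))) (Ioi 0) ∧
      ∫ t in Ioi (0 : ℝ), (t : ℂ) ^ (a - 1) * ((1 + t : ℝ) : ℂ) ^ (-(a + b)) =
        betaIntegral a b := by
  have himage : (fun x : ℝ => x / (1 - x)) '' Ioo 0 1 = Ioi 0 := by
    ext t
    refine ⟨?_, fun ht => ⟨t / (1 + t), ?_, ?_⟩⟩
    · rintro ⟨x, hx, rfl⟩
      exact div_pos hx.1 (sub_pos.2 hx.2)
    · have ht : (0 : ℝ) < t := ht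
      exact ⟨by positivity, (div_lt_one (by positivity)).2 (by linarith)⟩
    · have ht : (0 : ℝ) < t := ht
      field_simp
      ring
  rw [← himage]
  refine integrableOn_image_and_integral_image_eq_betaIntegral ha hb
    (φ' := fun x => ((1 - x) ^ 2)⁻¹) (fun x hx => ?_) (fun x hx y hy hxy => ?_) (fun x hx => ?_)
  · have h : HasDerivAt (fun y : ℝ => y / (1 - y))
        ((1 * (1 - x) - x * (0 - 1)) / (1 - x) ^ 2) x :=
      (hasDerivAt_id' x).div ((hasDerivAt_const x 1).sub (hasDerivAt_id' x)) (sub_pos.2 hx.2).ne'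
    exact h.hasDerivWithinAt.congr_deriv (by field_simp; ring)
  · have h1 := sub_pos.2 hx.2
    have h2 := sub_pos.2 hy.2
    field_simp at hxy
    linarith
  · obtain ⟨hx0, hx1⟩ := hx
    have hx1' : 0 < 1 - x := sub_pos.2 hx1
    have hB : ((1 - x : ℝ) : ℂ) ≠ 0 := ofReal_ne_zero.2 hx1'.ne'
    have h2 : ((((1 - x) ^ 2)⁻¹ : ℝ) : ℂ) = ((1 - x : ℝ) : ℂ) ^ (-2 : ℂ) := by
      rw [cpow_neg, cpow_two]; push_cast; rfl
    rw [real_smul, abs_of_pos (by positivity), h2,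
      show (1 + x / (1 - x) : ℝ) = (1 - x)⁻¹ by field_simp; ring,
      div_eq_mul_inv, ofReal_mul, mul_cpow_ofReal_nonneg hx0.le (inv_nonneg.2 hx1'.le),
      ofReal_inv_cpow hx1'.le, ofReal_inv_cpow hx1'.le, ← ofReal_one_sub,
      ← cpow_neg, ← cpow_neg, show b - 1 = -2 + -(a - 1) + -(-(a + b)) by ring,
      cpow_add _ _ hB, cpow_add _ _ hB]
    ring

theorem re_one_sub_sub_pos (hab : a.re + b.re < 1) : 0 < (1 - a - b).re := by
  simp only [sub_re, one_re]
  linarith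

theorem intervalIntegrable_and_integral_cpow_mul_abs_one_sub_cpow (ha : 0 < a.re)
    (hab : a.re + b.re < 1) :
    IntervalIntegrable (fun t : ℝ => (t : ℂ) ^ (a - 1) * ((|1 - t| : ℝ) : ℂ) ^ (-(a + b)))
        volume 0 1 ∧
      ∫ t in (0 : ℝ)..1, (t : ℂ) ^ (a - 1) * ((|1 - t| : ℝ) : ℂ) ^ (-(a + b)) =
        betaIntegral a (1 - a - b) := by
  have heq : EqOn (fun t : ℝ => (t : ℂ) ^ (a - 1) * ((|1 - t| : ℝ) : ℂ) ^ (-(a + b)))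
      (fun t : ℝ => (t : ℂ) ^ (a - 1) * (1 - (t : ℂ)) ^ (1 - a - b - 1)) (uIcc 0 1) := by
    intro t ht
    rw [uIcc_of_le zero_le_one] at ht
    simp only
    rw [abs_of_nonneg (sub_nonneg.2 ht.2), ← ofReal_one_sub,
      show 1 - a - b - 1 = -(a + b) by ring]
  exact ⟨(betaIntegral_convergent ha (re_one_sub_sub_pos hab)).congr
    (heq.symm.mono uIoc_subset_uIcc), intervalIntegral.integral_congr heq⟩

theorem integrableOn_and_integral_Ioi_one_cpow_mul_abs_one_sub_cpow (hb : 0 < b.re)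
    (hab : a.re + b.re < 1) :
    IntegrableOn (fun t : ℝ => (t : ℂ) ^ (a - 1) * ((|1 - t| : ℝ) : ℂ) ^ (-(a + b))) (Ioi 1) ∧
      ∫ t in Ioi (1 : ℝ), (t : ℂ) ^ (a - 1) * ((|1 - t| : ℝ) : ℂ) ^ (-(a + b)) =
        betaIntegral b (1 - a - b) := by
  have himage : (fun x : ℝ => x⁻¹) '' Ioo 0 1 = Ioi 1 := by
    ext t
    refine ⟨?_, fun ht => ⟨t⁻¹, ?_, inv_inv t⟩⟩
    · rintro ⟨x, hx, rfl⟩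
      exact (one_lt_inv₀ hx.1).2 hx.2
    · have ht : (1 : ℝ) < t := ht
      exact ⟨by positivity, inv_lt_one_of_one_lt₀ ht⟩
  rw [← himage]
  refine integrableOn_image_and_integral_image_eq_betaIntegral hb (re_one_sub_sub_pos hab)
    (φ' := fun x => -(x ^ 2)⁻¹) (fun x hx => (hasDerivAt_inv hx.1.ne').hasDerivWithinAt)
    (fun x _ y _ hxy => inv_injective hxy) (fun x hx => ?_)
  obtain ⟨hx0, hx1⟩ := hx
  have hx1' : 0 < 1 - x := sub_pos.2 hx1
  have hX : (x : ℂ) ≠ 0 := ofReal_ne_zero.2 hx0.ne'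
  have h2 : (((x ^ 2)⁻¹ : ℝ) : ℂ) = (x : ℂ) ^ (-2 : ℂ) := by
    rw [cpow_neg, cpow_two]; push_cast; rfl
  rw [real_smul, abs_neg, abs_of_pos (by positivity), h2,
    show |1 - x⁻¹| = (1 - x) * x⁻¹ by
      rw [abs_of_nonpos (by linarith [(one_lt_inv₀ hx0).2 hx1])]; field_simp; ring,
    ofReal_mul, mul_cpow_ofReal_nonneg hx1'.le (inv_nonneg.2 hx0.le),
    ofReal_inv_cpow hx0.le, ofReal_inv_cpow hx0.le, ← ofReal_one_sub,
    ← cpow_neg, ← cpow_neg, show b - 1 = -2 + -(a - 1) + -(-(a + b)) by ring,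
    show 1 - a - b - 1 = -(a + b) by ring, cpow_add _ _ hX, cpow_add _ _ hX]
  ring

theorem integral_Ioi_cpow_mul_abs_one_add_cpow_add_abs_one_sub_cpow (ha : 0 < a.re)
    (hb : 0 < b.re) (hab : a.re + b.re < 1) :
    ∫ t in Ioi (0 : ℝ), (t : ℂ) ^ (a - 1) *
        (((|1 + t| : ℝ) : ℂ) ^ (-(a + b)) + ((|1 - t| : ℝ) : ℂ) ^ (-(a + b))) =
      betaIntegral a b + betaIntegral a (1 - a - b) + betaIntegral b (1 - a - b) := by
  obtain ⟨hint₁, heq₁⟩ := integrableOn_and_integral_Ioi_cpow_mul_one_add_cpow ha hb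
  obtain ⟨hint₂, heq₂⟩ := intervalIntegrable_and_integral_cpow_mul_abs_one_sub_cpow ha hab
  obtain ⟨hint₃, heq₃⟩ := integrableOn_and_integral_Ioi_one_cpow_mul_abs_one_sub_cpow hb hab
  have hint₂₃ : IntegrableOn
      (fun t : ℝ => (t : ℂ) ^ (a - 1) * ((|1 - t| : ℝ) : ℂ) ^ (-(a + b))) (Ioi 0) := by
    rw [← Ioc_union_Ioi_eq_Ioi zero_le_one]
    exact ((intervalIntegrable_iff_integrableOn_Ioc_of_le zero_le_one).1 hint₂).union hint₃
  calc _ = ∫ t in Ioi (0 : ℝ), ((t : ℂ) ^ (a - 1) * ((1 + t : ℝ) : ℂ) ^ (-(a + b)) +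
        (t : ℂ) ^ (a - 1) * ((|1 - t| : ℝ) : ℂ) ^ (-(a + b))) := by
        refine setIntegral_congr_fun measurableSet_Ioi fun t ht => ?_
        rw [abs_of_pos (by linarith [mem_Ioi.1 ht]), mul_add]
    _ = _ := by
      rw [integral_add hint₁ hint₂₃, ← intervalIntegral.integral_interval_add_Ioi' hint₂ hint₃,
        heq₁, heq₂, heq₃, add_assoc]

end

theorem Gamma_one_sub_inv {s : ℂ} (hs : Gamma s ≠ 0) :
    (Gamma (1 - s))⁻¹ = Gamma s * sin (π * s) / π := by
  have h := Gamma_mul_Gamma_one_sub s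
  rcases eq_or_ne (sin (π * s)) 0 with h0 | h0
  · rw [h0, div_zero, mul_eq_zero, or_iff_right hs] at h
    rw [h, h0, inv_zero, mul_zero, zero_div]
  · have hπ : (π : ℂ) ≠ 0 := ofReal_ne_zero.2 Real.pi_ne_zero
    have h1 : Gamma (1 - s) ≠ 0 := right_ne_zero_of_mul (h ▸ div_ne_zero hπ h0)
    rw [eq_div_iff h0] at h
    refine eq_div_of_mul_eq hπ ?_
    calc (Gamma (1 - s))⁻¹ * π
        = (Gamma (1 - s))⁻¹ * (Gamma s * Gamma (1 - s) * sin (π * s)) := by rw [h]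
      _ = Gamma s * sin (π * s) := by field_simp

theorem betaIntegral_eq_Gamma_mul_sin_of_add_add_eq_one {a b c : ℂ} (ha : 0 < a.re)
    (hb : 0 < b.re) (hc : Gamma c ≠ 0) (habc : a + b + c = 1) :
    betaIntegral a b = Gamma a * Gamma b * Gamma c * sin (π * c) / π := by
  have hab : Gamma (a + b) ≠ 0 := Gamma_ne_zero_of_re_pos (by rw [add_re]; positivity)
  have h := Gamma_mul_Gamma_eq_betaIntegral ha hb
  rw [mul_assoc (Gamma a * Gamma b), mul_div_assoc, ← Gamma_one_sub_inv hc,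
    show 1 - c = a + b by linear_combination -habc, h]
  field_simp

theorem Gamma_half_div_Gamma_one_sub_half {x : ℂ} (hx : Gamma ((1 + x) / 2) ≠ 0) :
    Gamma (x / 2) / Gamma ((1 - x) / 2) =
      2 ^ (1 - x) * Gamma x * cos (π * x / 2) / (√π : ℝ) := by
  have hrefl := Gamma_one_sub_inv hx
  rw [show 1 - (1 + x) / 2 = (1 - x) / 2 by ring,
    show π * ((1 + x) / 2) = π * x / 2 + π / 2 by ring, sin_add_pi_div_two] at hrefl
  have hdup := Gamma_mul_Gamma_add_half (x / 2)
  rw [show x / 2 + 1 / 2 = (1 + x) / 2 by ring, show 2 * (x / 2) = x by ring] at hdup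
  have := ofReal_sqrt_pi_ne_zero
  rw [div_eq_mul_inv, hrefl, ← mul_div_assoc, ← mul_assoc, hdup, ← ofReal_sqrt_pi_sq]
  field_simp

theorem sin_add_sin_add_sin_of_add_add_eq_pi {x y z : ℂ} (h : x + y + z = π) :
    sin x + sin y + sin z = 4 * cos (x / 2) * cos (y / 2) * cos (z / 2) := by
  obtain rfl : z = π - (x + y) := by linear_combination h
  have hsin_two : ∀ u : ℂ, sin u = 2 * sin (u / 2) * cos (u / 2) := fun u => by
    rw [← sin_two_mul, mul_div_cancel₀ _ two_ne_zero]
  rw [sin_pi_sub, show (π - (x + y)) / 2 = π / 2 - (x / 2 + y / 2) by ring, cos_pi_div_two_sub,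
    hsin_two x, hsin_two y, hsin_two (x + y), add_div, sin_add, cos_add]
  linear_combination (-2 * sin (x / 2) * cos (x / 2)) * sin_sq_add_cos_sq (y / 2) +
    (-2 * sin (y / 2) * cos (y / 2)) * sin_sq_add_cos_sq (x / 2)

theorem betaIntegral_add_betaIntegral_add_betaIntegral_of_add_add_eq_one {a b c : ℂ}
    (ha : 0 < a.re) (hb : 0 < b.re) (hc : 0 < c.re) (habc : a + b + c = 1) :
    betaIntegral a b + betaIntegral a c + betaIntegral b c =
      (√π : ℝ) * (Gamma (a / 2) / Gamma ((1 - a) / 2)) * (Gamma (b / 2) / Gamma ((1 - b) / 2)) *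
        (Gamma (c / 2) / Gamma ((1 - c) / 2)) := by
  have hΓhalf : ∀ {s : ℂ}, 0 < s.re → Gamma ((1 + s) / 2) ≠ 0 := fun hs =>
    Gamma_ne_zero_of_re_pos (by simp; linarith)
  have hpow : (2 : ℂ) ^ (1 - a) * 2 ^ (1 - b) * 2 ^ (1 - c) = 2 ^ 2 := by
    rw [← cpow_add _ _ two_ne_zero, ← cpow_add _ _ two_ne_zero, ← cpow_two]
    congr 1
    linear_combination -habc
  have hsin := sin_add_sin_add_sin_of_add_add_eq_pi (x := π * a) (y := π * b) (z := π * c)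
    (by linear_combination (π : ℂ) * habc)
  rw [betaIntegral_eq_Gamma_mul_sin_of_add_add_eq_one ha hb (Gamma_ne_zero_of_re_pos hc) habc,
    betaIntegral_eq_Gamma_mul_sin_of_add_add_eq_one ha hc (Gamma_ne_zero_of_re_pos hb)
      (by linear_combination habc),
    betaIntegral_eq_Gamma_mul_sin_of_add_add_eq_one hb hc (Gamma_ne_zero_of_re_pos ha)
      (by linear_combination habc),
    Gamma_half_div_Gamma_one_sub_half (hΓhalf ha), Gamma_half_div_Gamma_one_sub_half (hΓhalf hb),
    Gamma_half_div_Gamma_one_sub_half (hΓhalf hc)]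
  have := ofReal_sqrt_pi_ne_zero
  field_simp
  linear_combination (Gamma a * Gamma b * Gamma c) * (((√π : ℝ) : ℂ) ^ 2 * hsin +
    4 * cos (π * a / 2) * cos (π * b / 2) * cos (π * c / 2) * ofReal_sqrt_pi_sq -
    π * cos (π * a / 2) * cos (π * b / 2) * cos (π * c / 2) * hpow)

theorem G_add_div_G_mul_G (w z : ℂ) :
    G (w + z) / (G w * G z) =
      (√π : ℝ) * Gamma ((w + z + 1) / 2) / (Gamma ((w + 1) / 2) * Gamma ((z + 1) / 2)) := by
  have := ofReal_sqrt_pi_ne_zero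
  have h2w : (2 : ℂ) ^ (w / 2) ≠ 0 := by simp [cpow_eq_zero_iff]
  have h2z : (2 : ℂ) ^ (z / 2) ≠ 0 := by simp [cpow_eq_zero_iff]
  rw [G, G, G, add_div w z, cpow_add _ _ two_ne_zero]
  field_simp

/-- For `Re w < 0`, `Re z < 0`, `Re(w+z) > -1`:
`½∫₀^∞ t^{-z-1}(|1+t|^{w+z}+|1-t|^{w+z}) dt = G(w+z) F₂(w,z)/(G(w)G(z))`. -/
theorem symmetrized_beta_integral (w z : ℂ) (hw : w.re < 0) (hz : z.re < 0)
    (hwz : -1 < (w + z).re) :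
    (1 / 2 : ℂ) * ∫ t in Set.Ioi (0 : ℝ),
        (t : ℂ) ^ (-z - 1) *
          (((|1 + t| : ℝ) : ℂ) ^ (w + z) + ((|1 - t| : ℝ) : ℂ) ^ (w + z)) =
      G (w + z) * F₂ w z / (G w * G z) := by
  have ha : 0 < (-z).re := by simpa using hz
  have hb : 0 < (-w).re := by simpa using hw
  have hab : (-z).re + (-w).re < 1 := by simp at hwz ⊢; linarith
  have hint := integral_Ioi_cpow_mul_abs_one_add_cpow_add_abs_one_sub_cpow ha hb hab
  rw [show -(-z + -w) = w + z by ring] at hint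
  rw [hint, betaIntegral_add_betaIntegral_add_betaIntegral_of_add_add_eq_one ha hb
      (re_one_sub_sub_pos hab) (by ring), mul_div_right_comm, G_add_div_G_mul_G, F₂,
    show (1 - -z) / 2 = (z + 1) / 2 by ring, show (1 - -w) / 2 = (w + 1) / 2 by ring,
    show (1 - -z - -w) / 2 = (w + z + 1) / 2 by ring,
    show (1 - (1 - -z - -w)) / 2 = -w / 2 + -z / 2 by ring]
  ring
end
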